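/- For every integer k ≥ 1, the graph G_k consisting of a triangle v₁v₂v₃ with v₁ joined to k pendant leaves, v₂ joined to k pendant leaves, and v₃ joined to one pendant leaf, is a König–Egerváry graph with n(G_k) = 2k+4, α(G_k) = 2k+1, μ(G_k) = 3, m(G_k) = 2k+4, and a(G_k) = 2k+2; consequently a(G_k) - α(G_k) = μ(G_k) - 2, showing the bound a(G) - α(G) ≤ μ(G) - 2 is attained by infinitely many non-bipartite König–Egerváry graphs. -/

import Mathlib

open Finset

namespace AnnPaper

variable {V : Type*}

/-- A finset of vertices is independent: no two of its members are adjacent. -/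
def IsIndepFinset (G : SimpleGraph V) (s : Finset V) : Prop :=
  ∀ a ∈ s, ∀ b ∈ s, ¬ G.Adj a b

/-- The independence number `α(G)`. -/
noncomputable def indepNum (G : SimpleGraph V) : ℕ :=
  sSup {k | ∃ s : Finset V, IsIndepFinset G s ∧ s.card = k}

/-- A finset of edges is a matching: edges of `G`, pairwise vertex-disjoint. -/
def IsMatchingFinset (G : SimpleGraph V) (s : Finset (Sym2 V)) : Prop :=
  (↑s ⊆ G.edgeSet) ∧ ∀ e ∈ s, ∀ f ∈ s, e ≠ f → ∀ v : V, v ∈ e → v ∉ f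

/-- The matching number `μ(G)`. -/
noncomputable def matchNum (G : SimpleGraph V) : ℕ :=
  sSup {k | ∃ s : Finset (Sym2 V), IsMatchingFinset G s ∧ s.card = k}

/-- The number of edges `m(G)`. -/
noncomputable def edgeCount (G : SimpleGraph V) : ℕ := G.edgeSet.ncard

/-- The degree of a vertex. -/
noncomputable def deg (G : SimpleGraph V) (v : V) : ℕ := (G.neighborSet v).ncard

/-- The annihilation number `a(G)`: the largest `k` such that the sum of the `k`
smallest degrees is at most `m(G)`; equivalently, the largest cardinality of a
set of vertices whose degree sum is at most `m(G)`. -/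
noncomputable def annNum (G : SimpleGraph V) : ℕ :=
  sSup {k | ∃ A : Finset V, A.card = k ∧ ∑ v ∈ A, deg G v ≤ edgeCount G}

/-- The number of edges of the subgraph induced on a set of vertices. -/
noncomputable def inducedEdgeCount (G : SimpleGraph V) (A : Set V) : ℕ :=
  (SimpleGraph.induce A G).edgeSet.ncard

/-!
The triangle `v₁ v₂ v₃` covers every edge, so `μ ≤ 3`, and the pendant edges at `v₁`, `v₂`, `v₃`
form a matching of size 3. An independent set meets each edge of a matching at most once, so
`α ≤ n - μ = 2k + 1`, while the `2k + 1` leaves are independent; hence `α + μ = n`.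
The degrees sum to `2m = 4k + 8` and are at most `k + 2`, so any `2k + 3` vertices have degree sum
at least `3k + 6 > m`, whereas dropping `v₁` and `v₂` leaves degree sum exactly `m`: `a = 2k + 2`.
-/

section General

variable {G : SimpleGraph V}

theorem IsMatchingFinset.card_le_of_forall_exists_mem {M : Finset (Sym2 V)}
    (hM : IsMatchingFinset G M) {C : Finset V} (hC : ∀ e ∈ M, ∃ v ∈ C, v ∈ e) :
    #M ≤ #C := by
  refine card_le_card_of_forall_subsingleton (fun e v => v ∈ e) hC fun v _ e he e' he' => ?_
  by_contra hne
  exact hM.2 e he.1 e' he'.1 hne v he.2 he'.2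

def IsVertexCoverFinset (G : SimpleGraph V) (C : Finset V) : Prop :=
  ∀ a b, G.Adj a b → a ∈ C ∨ b ∈ C

theorem IsVertexCoverFinset.isIndepFinset_compl [Fintype V] [DecidableEq V] {C : Finset V}
    (hC : IsVertexCoverFinset G C) : IsIndepFinset G Cᶜ := fun a ha b hb hab => by
  rw [mem_compl] at ha hb
  exact (hC a b hab).elim ha hb

theorem IsMatchingFinset.card_le_of_isVertexCover {M : Finset (Sym2 V)}
    (hM : IsMatchingFinset G M) {C : Finset V} (hC : IsVertexCoverFinset G C) :
    #M ≤ #C := by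
  refine hM.card_le_of_forall_exists_mem fun e he => ?_
  have hG : e ∈ G.edgeSet := hM.1 he
  induction e using Sym2.ind with
  | h a b => rcases hC a b hG with h | h <;> exact ⟨_, h, by simp⟩

theorem IsIndepFinset.card_add_card_le [Fintype V] [DecidableEq V] {s : Finset V}
    (hs : IsIndepFinset G s) {M : Finset (Sym2 V)} (hM : IsMatchingFinset G M) :
    #s + #M ≤ Fintype.card V := by
  have hM_le : #M ≤ #sᶜ := hM.card_le_of_isVertexCover fun a b hab => by
    by_contra! h
    simp only [mem_compl, not_not] at h
    exact hs a h.1 b h.2 hab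
  rw [card_compl] at hM_le
  have := s.card_le_univ
  omega

theorem deg_eq_degree (G : SimpleGraph V) (v : V) [Fintype (G.neighborSet v)] :
    deg G v = G.degree v :=
  Set.ncard_eq_toFinset_card' _

theorem edgeCount_eq_card_edgeFinset (G : SimpleGraph V) [Fintype G.edgeSet] :
    edgeCount G = G.edgeFinset.card :=
  Set.ncard_eq_toFinset_card' _

theorem sum_deg_eq_two_mul_edgeCount [Fintype V] :
    ∑ v, deg G v = 2 * edgeCount G := by
  classical
  simp only [deg_eq_degree, edgeCount_eq_card_edgeFinset, G.sum_degrees_eq_twice_card_edges]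

theorem edgeCount_le_of_sum_deg_le [Fintype V] [DecidableEq V] {Δ : ℕ}
    (hΔ : ∀ v, deg G v ≤ Δ) {A : Finset V} (hA : ∑ v ∈ A, deg G v ≤ edgeCount G) :
    edgeCount G ≤ (Fintype.card V - #A) * Δ := by
  have hsplit := sum_add_sum_compl A (deg G)
  rw [sum_deg_eq_two_mul_edgeCount] at hsplit
  have hcompl : ∑ v ∈ Aᶜ, deg G v ≤ #Aᶜ * Δ := sum_le_card_nsmul _ _ _ fun v _ => hΔ v
  rw [card_compl] at hcompl
  omega

end General

theorem card_filter_fin_val (n : ℕ) (P : ℕ → Prop) [DecidablePred P] :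
    #{i : Fin n | P i} = #{i ∈ range n | P i} := by
  rw [card_filter, card_filter]
  exact Fin.sum_univ_eq_sum_range (fun i => if P i then 1 else 0) n

/-- Vertices `0, 1, 2` are the triangle `v₁ v₂ v₃`; the leaves of `v₁` are `3, …, k + 2`, those
of `v₂` are `k + 3, …, 2k + 2`, and `2k + 3` is the leaf of `v₃`. Each edge `{a, b}` with `a < b`
is listed once, as `gkRel k a b`. -/
def gkRel (k a b : ℕ) : Prop :=
  a < b ∧ b < 3 ∨ a = 0 ∧ 3 ≤ b ∧ b ≤ k + 2 ∨ a = 1 ∧ k + 3 ≤ b ∧ b ≤ 2 * k + 2 ∨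
    a = 2 ∧ b = 2 * k + 3

instance (k a b : ℕ) : Decidable (gkRel k a b) := by unfold gkRel; infer_instance

def Gk (k : ℕ) : SimpleGraph (Fin (2 * k + 4)) where
  Adj a b := gkRel k a b ∨ gkRel k b a
  symm := ⟨fun _ _ => Or.symm⟩
  loopless := ⟨fun a => by simp only [gkRel]; omega⟩

instance (k : ℕ) : DecidableRel (Gk k).Adj := fun _ _ => inferInstanceAs (Decidable (_ ∨ _))

theorem Gk_adj {k : ℕ} {a b : Fin (2 * k + 4)} :
    (Gk k).Adj a b ↔ gkRel k a b ∨ gkRel k b a := Iff.rfl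

def gkDeg (k i : ℕ) : ℕ := if i < 2 then k + 2 else if i = 2 then 3 else 1

theorem gkDeg_le {k : ℕ} (hk : 1 ≤ k) (i : ℕ) : gkDeg k i ≤ k + 2 := by
  unfold gkDeg; split_ifs <;> omega

theorem deg_Gk (k : ℕ) (v : Fin (2 * k + 4)) : deg (Gk k) v = gkDeg k v := by
  rw [deg_eq_degree, ← SimpleGraph.card_neighborFinset_eq_degree,
    SimpleGraph.neighborFinset_eq_filter]
  change #{w : Fin (2 * k + 4) | gkRel k v w ∨ gkRel k w v} = _
  rw [card_filter_fin_val _ (fun i => gkRel k v i ∨ gkRel k i v)]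
  have hv := v.isLt
  generalize (v : ℕ) = n at *
  obtain rfl | rfl | rfl | hn | hn | rfl : n = 0 ∨ n = 1 ∨ n = 2 ∨ 3 ≤ n ∧ n ≤ k + 2 ∨
      k + 3 ≤ n ∧ n ≤ 2 * k + 2 ∨ n = 2 * k + 3 := by omega
  · trans #(Icc 1 (k + 2))
    · congr 1; ext i; rw [mem_filter]; simp [gkRel]; omega
    · simp [gkDeg]
  · trans #(insert 0 (insert 2 (Icc (k + 3) (2 * k + 2))))
    · congr 1; ext i; rw [mem_filter]; simp [gkRel]; omega
    · rw [card_insert_of_notMem (by simp), card_insert_of_notMem (by simp)]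
      simp [gkDeg]; omega
  · trans #{0, 1, 2 * k + 3}
    · congr 1; ext i; rw [mem_filter]; simp [gkRel]; omega
    · rw [card_insert_of_notMem (by simp), card_pair (by omega)]
      simp [gkDeg]
  · trans #({0} : Finset ℕ)
    · congr 1; ext i; rw [mem_filter]; simp [gkRel]; omega
    · rw [card_singleton, gkDeg, if_neg (by omega), if_neg (by omega)]
  · trans #({1} : Finset ℕ)
    · congr 1; ext i; rw [mem_filter]; simp [gkRel]; omega
    · rw [card_singleton, gkDeg, if_neg (by omega), if_neg (by omega)]
  · trans #({2} : Finset ℕ)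
    · congr 1; ext i; rw [mem_filter]; simp [gkRel]; omega
    · rw [card_singleton, gkDeg, if_neg (by omega), if_neg (by omega)]

theorem sum_gkDeg (k : ℕ) : ∑ i ∈ range (2 * k + 4), gkDeg k i = 4 * k + 8 := by
  have hleaf (x : ℕ) : gkDeg k (3 + x) = 1 := by
    rw [gkDeg, if_neg (by omega), if_neg (by omega)]
  rw [show 2 * k + 4 = 3 + (2 * k + 1) by ring, sum_range_add]
  simp only [hleaf, sum_const, card_range, smul_eq_mul, mul_one]
  simp [sum_range_succ, gkDeg]
  ring

theorem edgeCount_Gk (k : ℕ) : edgeCount (Gk k) = 2 * k + 4 := by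
  have h := sum_deg_eq_two_mul_edgeCount (G := Gk k)
  simp only [deg_Gk] at h
  rw [Fin.sum_univ_eq_sum_range (gkDeg k), sum_gkDeg] at h
  omega

theorem Gk_adj_lt_three {k : ℕ} {a b : Fin (2 * k + 4)} (h : (Gk k).Adj a b) :
    (a : ℕ) < 3 ∨ (b : ℕ) < 3 := by
  rcases h with h | h <;> simp only [gkRel] at h <;> omega

def gkHubs (k : ℕ) : Finset (Fin (2 * k + 4)) := {v | (v : ℕ) < 3}

theorem card_gkHubs (k : ℕ) : #(gkHubs k) = 3 := by
  rw [gkHubs, Fin.card_filter_val_lt]; omega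

theorem isVertexCoverFinset_gkHubs (k : ℕ) : IsVertexCoverFinset (Gk k) (gkHubs k) :=
  fun _ _ h => by simpa only [gkHubs, mem_filter, mem_univ, true_and] using Gk_adj_lt_three h

def gkMatching {k : ℕ} (hk : 1 ≤ k) : Finset (Sym2 (Fin (2 * k + 4))) :=
  {s(⟨0, by omega⟩, ⟨3, by omega⟩), s(⟨1, by omega⟩, ⟨k + 3, by omega⟩),
    s(⟨2, by omega⟩, ⟨2 * k + 3, by omega⟩)}

theorem card_gkMatching {k : ℕ} (hk : 1 ≤ k) : #(gkMatching hk) = 3 := by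
  rw [gkMatching, card_insert_of_notMem, card_pair] <;> simp [Fin.ext_iff]

theorem isMatchingFinset_gkMatching {k : ℕ} (hk : 1 ≤ k) :
    IsMatchingFinset (Gk k) (gkMatching hk) := by
  constructor
  · intro e he
    simp only [gkMatching, coe_insert, coe_singleton, Set.mem_insert_iff,
      Set.mem_singleton_iff] at he
    rcases he with rfl | rfl | rfl <;> simp [Gk_adj, gkRel] <;> omega
  · intro e he f hf hne v hve hvf
    simp only [gkMatching, mem_insert, mem_singleton] at he hf
    rcases he with rfl | rfl | rfl <;> rcases hf with rfl | rfl | rfl <;>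
      first
      | exact hne rfl
      | rw [Sym2.mem_iff] at hve hvf
        rcases hve with rfl | rfl <;> rcases hvf with h | h <;> simp only [Fin.ext_iff] at h <;>
          omega

theorem indepNum_Gk {k : ℕ} (hk : 1 ≤ k) : indepNum (Gk k) = 2 * k + 1 := by
  refine IsGreatest.csSup_eq ⟨⟨_, (isVertexCoverFinset_gkHubs k).isIndepFinset_compl, ?_⟩, ?_⟩
  · rw [card_compl, card_gkHubs, Fintype.card_fin]; omega
  · rintro _ ⟨s, hs, rfl⟩
    have := hs.card_add_card_le (isMatchingFinset_gkMatching hk)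
    rw [card_gkMatching, Fintype.card_fin] at this
    omega

theorem matchNum_Gk {k : ℕ} (hk : 1 ≤ k) : matchNum (Gk k) = 3 := by
  refine IsGreatest.csSup_eq ⟨⟨_, isMatchingFinset_gkMatching hk, card_gkMatching hk⟩, ?_⟩
  rintro _ ⟨M, hM, rfl⟩
  exact card_gkHubs k ▸ hM.card_le_of_isVertexCover (isVertexCoverFinset_gkHubs k)

theorem annNum_Gk {k : ℕ} (hk : 1 ≤ k) : annNum (Gk k) = 2 * k + 2 := by
  set P : Finset (Fin (2 * k + 4)) := {⟨0, by omega⟩, ⟨1, by omega⟩}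
  have hP : #P = 2 := card_pair (by simp)
  refine IsGreatest.csSup_eq ⟨⟨Pᶜ, ?_, ?_⟩, ?_⟩
  · rw [card_compl, hP, Fintype.card_fin]; omega
  · have hsplit := sum_add_sum_compl P (deg (Gk k))
    rw [sum_deg_eq_two_mul_edgeCount, edgeCount_Gk, sum_pair (by simp),
      deg_Gk, deg_Gk] at hsplit
    norm_num [gkDeg] at hsplit
    rw [edgeCount_Gk]
    omega
  · rintro _ ⟨A, rfl, hA⟩
    have h := edgeCount_le_of_sum_deg_le (fun v => (deg_Gk k v).trans_le (gkDeg_le hk v)) hA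
    rw [edgeCount_Gk, Fintype.card_fin] at h
    by_contra! hA
    have : (2 * k + 4 - #A) * (k + 2) ≤ 1 * (k + 2) := Nat.mul_le_mul_right _ (by omega)
    omega

theorem not_colorable_two_Gk (k : ℕ) : ¬ (Gk k).Colorable 2 := fun h =>
  h.cliqueFree (by norm_num : 2 < 3) {⟨0, by omega⟩, ⟨1, by omega⟩, ⟨2, by omega⟩}
    (SimpleGraph.is3Clique_triple_iff.2 (by simp [Gk_adj, gkRel]))

theorem stmt19 (k : ℕ) (hk : 1 ≤ k) :
    ∃ G : SimpleGraph (Fin (2 * k + 4)), ¬ G.Colorable 2 ∧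
      indepNum G + matchNum G = Fintype.card (Fin (2 * k + 4)) ∧
      indepNum G = 2 * k + 1 ∧ matchNum G = 3 ∧
      edgeCount G = 2 * k + 4 ∧ annNum G = 2 * k + 2 ∧
      (annNum G : ℤ) - (indepNum G : ℤ) = (matchNum G : ℤ) - 2 := by
  refine ⟨Gk k, not_colorable_two_Gk k, ?_, indepNum_Gk hk, matchNum_Gk hk, edgeCount_Gk k,
    annNum_Gk hk, ?_⟩
  · rw [indepNum_Gk hk, matchNum_Gk hk, Fintype.card_fin]
  · rw [indepNum_Gk hk, matchNum_Gk hk, annNum_Gk hk]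
    omega

end AnnPaper
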